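/- arXiv:math/0409030 — 8 statements merged into one kernel-verified Lean document; each statement's English description precedes it below -/
import Mathlib

section
/- The integral binary quadratic forms q₁(x,y) = 2y² - 10xy and q₂(x,y) = 8y² - 10xy (with Gram matrices [[0,-5],[-5,2]] and [[0,-5],[-5,8]] respectively) are not equivalent over ℤ: there is no ℤ-linear automorphism T of ℤ² such that q₂(T(v)) = q₁(v) for all v ∈ ℤ². (Indeed q₁(0,1) = 2, while q₂ does not represent 2.) -/
/-! `q₁(0,1) = 2`, whereas `8y² - 10xy = 2` would make `y` a unit dividing `1 = y(4y - 5x)`,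
forcing `4y - 5x = y`, i.e. `3y = 5x` with `y = ±1`. -/

theorem eight_mul_sq_sub_ten_mul_mul_ne_two (x y : ℤ) : 8 * y ^ 2 - 10 * x * y ≠ 2 := by
  intro h
  have hunit : y * (4 * y - 5 * x) = 1 := by linarith
  rcases Int.eq_one_or_neg_one_of_mul_eq_one hunit with rfl | rfl <;> omega

/-- The integral binary quadratic forms `q₁(x,y) = 2y² - 10xy` and
`q₂(x,y) = 8y² - 10xy` (with Gram matrices `[[0,-5],[-5,2]]` and `[[0,-5],[-5,8]]`)
are not equivalent over `ℤ`: there is no `ℤ`-linear automorphism `T` of `ℤ²` with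
`q₂(T v) = q₁(v)` for all `v`. -/
theorem binary_forms_not_equivalent :
    ¬ ∃ T : (Fin 2 → ℤ) ≃ₗ[ℤ] (Fin 2 → ℤ),
      ∀ v : Fin 2 → ℤ,
        8 * (T v 1) ^ 2 - 10 * (T v 0) * (T v 1) =
          2 * (v 1) ^ 2 - 10 * (v 0) * (v 1) := by
  rintro ⟨T, hT⟩
  exact eight_mul_sq_sub_ten_mul_mul_ne_two _ _ (by simpa using hT ![0, 1])
end

section
/- There are no integers x, y, z satisfying -5xy + 4y² + 20z² = 1; equivalently, there are no integers x, y, z satisfying -10xy + 8y² + 40z² = 2. -/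
lemma aux_sq_zmod5 : ∀ s : ZMod 5, s * s ≠ 0 → s * s = 1 ∨ s * s = -1 := by decide

/-- If a prime `p` divides `20 z ^ 2 - 1`, then `p ≡ ±1 (mod 5)`. -/
lemma aux_prime_case (p : ℕ) [hp : Fact p.Prime] (z : ℤ)
    (h : (p : ℤ) ∣ 20 * z ^ 2 - 1) : (p : ZMod 5) = 1 ∨ (p : ZMod 5) = -1 := by
  have hp2 : p ≠ 2 := by
    rintro rfl
    obtain ⟨k, hk⟩ := h
    omega
  have hp5 : p ≠ 5 := by
    rintro rfl
    obtain ⟨k, hk⟩ := h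
    omega
  have : Fact (Nat.Prime 5) := ⟨by norm_num⟩
  have h5 : ((5 : ℤ) : ZMod p) ≠ 0 := by
    rw [Ne, ZMod.intCast_zmod_eq_zero_iff_dvd]
    exact_mod_cast fun hd => hp5 ((Nat.prime_dvd_prime_iff_eq hp.out (by norm_num)).mp
      (by exact_mod_cast hd))
  -- 20 z² ≡ 1 mod p, so 5 is a square mod p
  have hz : (20 : ZMod p) * (z : ZMod p) ^ 2 = 1 := by
    have : ((20 * z ^ 2 - 1 : ℤ) : ZMod p) = 0 := by
      rw [ZMod.intCast_zmod_eq_zero_iff_dvd]; exact h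
    push_cast at this
    linear_combination this
  have hsq : IsSquare ((5 : ℤ) : ZMod p) := by
    refine ⟨10 * (z : ZMod p), ?_⟩
    push_cast
    linear_combination (-5 : ZMod p) * hz
  have l1 : legendreSym p 5 = 1 := (legendreSym.eq_one_iff p h5).mpr hsq
  have l2 : legendreSym 5 (p : ℤ) = 1 := by
    have hqr := legendreSym.quadratic_reciprocity_one_mod_four (p := 5) (q := p)
      (by norm_num) hp2
    rw [show ((5 : ℕ) : ℤ) = 5 by norm_cast] at hqr
    rw [← hqr]; exact l1
  have hpne0 : ((p : ℤ) : ZMod 5) ≠ 0 := by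
    rw [Ne, ZMod.intCast_zmod_eq_zero_iff_dvd]
    exact_mod_cast fun hd => hp5 ((Nat.prime_dvd_prime_iff_eq (by norm_num) hp.out).mp
      (by exact_mod_cast hd)).symm
  have hsqp : IsSquare ((p : ℤ) : ZMod 5) := (legendreSym.eq_one_iff 5 hpne0).mp l2
  obtain ⟨r, hr⟩ := hsqp
  have hc : ((p : ℕ) : ZMod 5) = r * r := by exact_mod_cast hr
  have hrne : r * r ≠ 0 := by
    rw [← hc]
    intro h0
    exact hpne0 (by rw [Int.cast_natCast]; exact h0)
  rw [hc]
  exact aux_sq_zmod5 r hrne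

/-- Every positive divisor of `20 z ^ 2 - 1` is `≡ ±1 (mod 5)`. -/
lemma aux_nat_divisor (z : ℤ) : ∀ n : ℕ, (n : ℤ) ∣ 20 * z ^ 2 - 1 →
    (n : ZMod 5) = 1 ∨ (n : ZMod 5) = -1 := by
  intro n
  induction n using Nat.strong_induction_on with
  | _ n ih =>
    intro hd
    have hM : 20 * z ^ 2 - 1 ≠ 0 := by
      intro h0
      have := Int.emod_emod_of_dvd z (by norm_num : (2:ℤ) ∣ 4)
      omega
    have hn0 : n ≠ 0 := by
      rintro rfl
      simp at hd
      exact hM hd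
    rcases eq_or_ne n 1 with rfl | hn1
    · left; simp
    · obtain ⟨p, hpp, hpd⟩ := Nat.exists_prime_and_dvd hn1
      obtain ⟨m, hm⟩ := hpd
      have : Fact p.Prime := ⟨hpp⟩
      have hpdvd : (p : ℤ) ∣ 20 * z ^ 2 - 1 := by
        refine dvd_trans ?_ hd
        exact_mod_cast Dvd.intro m hm.symm
      have hmdvd : (m : ℤ) ∣ 20 * z ^ 2 - 1 := by
        refine dvd_trans ?_ hd
        exact_mod_cast Dvd.intro_left p hm.symm
      have hmlt : m < n := by
        have hp1 : 1 < p := hpp.one_lt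
        have hm0 : m ≠ 0 := by rintro rfl; simp [hm] at hn0
        calc m < p * m := by nlinarith [Nat.pos_of_ne_zero hm0]
        _ = n := hm.symm
      have h1 := aux_prime_case p z hpdvd
      have h2 := ih m hmlt hmdvd
      have hcast : (n : ZMod 5) = (p : ZMod 5) * (m : ZMod 5) := by
        rw [hm]; push_cast; ring
      rw [hcast]
      rcases h1 with h1 | h1 <;> rcases h2 with h2 | h2 <;> rw [h1, h2] <;> simp

/-- Every divisor of `20 z ^ 2 - 1` is `≡ ±1 (mod 5)`. -/
lemma aux_int_divisor (z : ℤ) (y : ℤ) (hd : y ∣ 20 * z ^ 2 - 1) :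
    (y : ZMod 5) = 1 ∨ (y : ZMod 5) = -1 := by
  have habs : ((y.natAbs : ℤ)) ∣ 20 * z ^ 2 - 1 := by
    rwa [Int.natAbs_dvd]
  have h := aux_nat_divisor z y.natAbs habs
  have h' : ((y.natAbs : ℤ) : ZMod 5) = 1 ∨ ((y.natAbs : ℤ) : ZMod 5) = -1 := by
    rcases h with h | h
    · left; rw [Int.cast_natCast]; exact h
    · right; rw [Int.cast_natCast]; exact h
  rcases Int.natAbs_eq y with he | he
  · rw [he]; exact h'
  · rw [he, Int.cast_neg]
    rcases h' with h' | h'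
    · right; rw [h']
    · left; rw [h']; ring

/-- There are no integers `x, y, z` with `-5xy + 4y² + 20z² = 1`; equivalently,
there are no integers `x, y, z` with `-10xy + 8y² + 40z² = 2`. -/
theorem no_integral_solution :
    (¬ ∃ x y z : ℤ, -5 * x * y + 4 * y ^ 2 + 20 * z ^ 2 = 1) ∧
    (¬ ∃ x y z : ℤ, -10 * x * y + 8 * y ^ 2 + 40 * z ^ 2 = 2) := by
  have main : ¬ ∃ x y z : ℤ, -5 * x * y + 4 * y ^ 2 + 20 * z ^ 2 = 1 := by
    rintro ⟨x, y, z, h⟩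
    have hdvd : y ∣ 20 * z ^ 2 - 1 := ⟨5 * x - 4 * y, by linarith⟩
    have h1 := aux_int_divisor z y hdvd
    -- reduce the equation mod 5
    have h5 : ((-5 * x * y + 4 * y ^ 2 + 20 * z ^ 2 : ℤ) : ZMod 5) = 1 := by
      rw [h]; norm_num
    push_cast at h5
    have hy2 : (4 : ZMod 5) * (y : ZMod 5) ^ 2 = 1 := by
      have h5' : ((5 : ℤ) : ZMod 5) = 0 := by decide
      push_cast at h5'
      linear_combination h5 + (x * (y:ZMod 5) - 4 * (z:ZMod 5)^2) * h5'
    rcases h1 with h1 | h1 <;> rw [h1] at hy2 <;> norm_num at hy2 <;>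
      revert hy2 <;> decide
  refine ⟨main, ?_⟩
  rintro ⟨x, y, z, h⟩
  exact main ⟨x, y, z, by linarith⟩
end

section
/- The integral ternary quadratic forms q₁(x,y,z) = 2y² - 10xy + 40z² and q₂(x,y,z) = 8y² - 10xy + 40z² (with Gram matrices [[0,-5,0],[-5,2,0],[0,0,40]] and [[0,-5,0],[-5,8,0],[0,0,40]] respectively) are not equivalent over ℤ: there is no ℤ-linear automorphism T of ℤ³ such that q₂(T(v)) = q₁(v) for all v ∈ ℤ³. -/
/-!
The form `q₁` takes the value `2` at `(0, 1, 0)`, so it suffices that `q₂` never does.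
If `q₂(a, b, c) = 2` then `4b² - 5ab + 20c² = 1`. This forces `b` odd and `b² ≡ -1 (mod 5)`,
so `|b|` is not a square mod `5`; on the other hand `5 ≡ (10c)² (mod b)`. Quadratic reciprocity
for the Jacobi symbol turns the second fact into the negation of the first.
-/

theorem ZMod.isSquare_natCast_of_isSquare_prime {p n : ℕ} [Fact p.Prime] (hp : p % 4 = 1)
    (hn : Odd n) (hpn : p.Coprime n) (h : IsSquare (p : ZMod n)) : IsSquare (n : ZMod p) := by
  have hJ : jacobiSym p n = 1 :=
    (jacobiSym.eq_one_or_neg_one (by simpa [Int.gcd] using hpn)).resolve_right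
      fun hneg => nonsquare_of_jacobiSym_eq_neg_one hneg (by exact_mod_cast h)
  rw [jacobiSym.quadratic_reciprocity_one_mod_four hp hn] at hJ
  exact_mod_cast isSquare_of_jacobiSym_eq_one hJ

theorem ZMod.not_isSquare_of_sq_eq_four {x : ZMod 5} (hx : x ^ 2 = 4) : ¬IsSquare x := by
  rintro ⟨r, rfl⟩
  revert r hx
  decide

theorem q₂_ne_two (a b c : ℤ) : 8 * b ^ 2 - 10 * a * b + 40 * c ^ 2 ≠ 2 := by
  intro h
  have h1 : 4 * b ^ 2 - 5 * (a * b) + 20 * c ^ 2 = 1 := by linarith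
  have hb_odd : Odd b := by
    have : Odd (5 * (a * b)) := by
      rw [show 5 * (a * b) = 2 * (2 * b ^ 2 + 10 * c ^ 2) - 1 by linarith]
      exact (even_two_mul _).sub_odd odd_one
    exact (Int.odd_mul.mp (Int.odd_mul.mp this).2).2
  set n := b.natAbs
  have hn_sq : (n : ZMod 5) ^ 2 = 4 := by
    have : ((n : ℤ) : ZMod 5) ^ 2 = 4 := by
      rw [← Int.cast_pow, Int.natAbs_sq]
      have := congrArg (Int.cast : ℤ → ZMod 5) h1
      push_cast at this ⊢
      have h5 : (5 : ZMod 5) = 0 := rfl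
      linear_combination -this + (b ^ 2 - a * b + 4 * c ^ 2 - 1) * h5
    exact_mod_cast this
  have hfive : IsSquare (((5 : ℕ) : ℤ) : ZMod n) := by
    have hdvd : (n : ℤ) ∣ (10 * c) ^ 2 - 5 :=
      Int.natAbs_dvd.mpr ⟨5 * (5 * a - 4 * b), by linear_combination 5 * h1⟩
    rw [← ZMod.intCast_zmod_eq_zero_iff_dvd] at hdvd
    push_cast at hdvd ⊢
    exact ⟨10 * c, by linear_combination -hdvd⟩
  have hcop : Nat.Coprime 5 n := by
    rw [Nat.Prime.coprime_iff_not_dvd (by norm_num), ← ZMod.natCast_eq_zero_iff]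
    intro h0
    rw [h0] at hn_sq
    exact absurd hn_sq (by decide)
  have : Fact (Nat.Prime 5) := ⟨by norm_num⟩
  exact ZMod.not_isSquare_of_sq_eq_four hn_sq
    (ZMod.isSquare_natCast_of_isSquare_prime (by norm_num) (Int.natAbs_odd.mpr hb_odd) hcop
      (by exact_mod_cast hfive))

/-- The integral ternary quadratic forms `q₁(x,y,z) = 2y² - 10xy + 40z²` and
`q₂(x,y,z) = 8y² - 10xy + 40z²` (with Gram matrices `[[0,-5,0],[-5,2,0],[0,0,40]]`
and `[[0,-5,0],[-5,8,0],[0,0,40]]`) are not equivalent over `ℤ`. -/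
theorem ternary_forms_not_equivalent :
    ¬ ∃ T : (Fin 3 → ℤ) ≃ₗ[ℤ] (Fin 3 → ℤ),
      ∀ v : Fin 3 → ℤ,
        8 * (T v 1) ^ 2 - 10 * (T v 0) * (T v 1) + 40 * (T v 2) ^ 2 =
          2 * (v 1) ^ 2 - 10 * (v 0) * (v 1) + 40 * (v 2) ^ 2 := by
  rintro ⟨T, hT⟩
  have h := hT ![0, 1, 0]
  norm_num at h
  exact q₂_ne_two _ _ _ h
end

section
/- There are no integers p, q, z satisfying 25p² - 1 = q² - 20z². -/
/-!
Since `q² - 25p² = 20z² - 1`, the integer `q - 5p` divides `20z² - 1 = 5(2z)² - 1`. For every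
prime `ℓ` dividing it, `5` is a square mod `ℓ`, so `ℓ` is a square mod `5` by quadratic
reciprocity (`5 ≡ 1 mod 4`); `ℓ` is odd, and `-1 = 2²` is a square mod `5`, so every divisor of
`20z² - 1` is a square mod `5`. On the other hand the equation gives `(q - 5p)² ≡ -1 mod 5`, and
`-1` is not a fourth power mod `5`.
-/

lemma isSquare_natCast_zmod_five_of_dvd {ℓ : ℕ} [Fact ℓ.Prime] (hℓ : ℓ ≠ 2) {w : ℤ}
    (h : (ℓ : ℤ) ∣ 5 * w ^ 2 - 1) : IsSquare (ℓ : ZMod 5) := by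
  have h5 : (5 : ZMod ℓ) * (w : ZMod ℓ) ^ 2 = 1 := by
    have := (ZMod.intCast_zmod_eq_zero_iff_dvd _ ℓ).mpr h
    push_cast at this
    linear_combination this
  have hw : (w : ZMod ℓ) ≠ 0 := by
    rintro hw
    simp [hw] at h5
  have hsq : IsSquare ((5 : ℕ) : ZMod ℓ) := ⟨(w : ZMod ℓ)⁻¹, by field_simp; linear_combination h5⟩
  have : Fact (Nat.Prime 5) := ⟨by norm_num⟩
  exact (ZMod.exists_sq_eq_prime_iff_of_mod_four_eq_one (by norm_num) hℓ).mpr hsq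

lemma isSquare_intCast_zmod_five_of_prime_dvd {p z : ℤ} (hp : Prime p)
    (h : p ∣ 20 * z ^ 2 - 1) : IsSquare (p : ZMod 5) := by
  obtain ⟨ℓ, hpℓ⟩ : ∃ ℓ : ℕ, p.natAbs = ℓ := ⟨_, rfl⟩
  have : Fact ℓ.Prime := ⟨hpℓ ▸ Int.prime_iff_natAbs_prime.mp hp⟩
  have hℓ : (ℓ : ℤ) ∣ 20 * z ^ 2 - 1 := by
    rw [Int.natCast_dvd, ← hpℓ]
    exact Int.natAbs_dvd_natAbs.mpr h
  have hℓ2 : ℓ ≠ 2 := by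
    rintro rfl
    omega
  have hsq := isSquare_natCast_zmod_five_of_dvd hℓ2 (w := 2 * z) (hℓ.trans ⟨1, by ring⟩)
  rcases Int.natAbs_eq p with hp' | hp' <;> rw [hpℓ] at hp' <;> rw [hp']
  · exact_mod_cast hsq
  · push_cast
    rw [← neg_one_mul]
    exact IsSquare.mul ⟨2, by decide⟩ hsq

lemma isSquare_intCast_zmod_five_of_dvd {z d : ℤ} (h : d ∣ 20 * z ^ 2 - 1) :
    IsSquare (d : ZMod 5) := by
  induction d using UniqueFactorizationMonoid.induction_on_prime with
  | h₁ =>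
    rw [zero_dvd_iff] at h
    omega
  | h₂ u hu =>
    rcases Int.isUnit_iff.mp hu with rfl | rfl
    · exact ⟨1, by decide⟩
    · exact ⟨2, by decide⟩
  | h₃ a p _ hp ih =>
    push_cast
    exact (isSquare_intCast_zmod_five_of_prime_dvd hp (dvd_of_mul_right_dvd h)).mul
      (ih (dvd_of_mul_left_dvd h))

lemma zmod_five_pow_four_ne_neg_one : ∀ r : ZMod 5, r ^ 4 ≠ -1 := by decide

/-- There are no integers `p, q, z` satisfying `25p² - 1 = q² - 20z²`. -/
theorem no_solution_25p2 :
    ¬ ∃ p q z : ℤ, 25 * p ^ 2 - 1 = q ^ 2 - 20 * z ^ 2 := by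
  rintro ⟨p, q, z, h⟩
  obtain ⟨r, hr⟩ := isSquare_intCast_zmod_five_of_dvd
    (⟨q + 5 * p, by linear_combination h⟩ : q - 5 * p ∣ 20 * z ^ 2 - 1)
  have hsq : ((q - 5 * p : ℤ) : ZMod 5) ^ 2 = -1 := by
    have h5 : (5 : ℤ) ∣ (q - 5 * p) ^ 2 + 1 :=
      ⟨10 * p ^ 2 - 2 * p * q + 4 * z ^ 2, by linear_combination -h⟩
    have := (ZMod.intCast_zmod_eq_zero_iff_dvd _ 5).mpr h5
    push_cast at this ⊢
    linear_combination this
  exact zmod_five_pow_four_ne_neg_one r (by rw [← hsq, hr]; ring)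
end

section
/- There are no integers a, b, z satisfying (5a+2)(5a+3) = b² - 5z². -/
/-!
Exactly one of `5a+2`, `5a+3` is odd; call it `D` and the other one `K`. Then `D` and `K`
are coprime and `D ≡ ±2 (mod 5)`. If `5` is not a square modulo a prime `p`, then
`p ∣ b² - 5z²` forces `p ∣ b` and `p ∣ z`, so by descent `p` divides `b² - 5z² = DK`, hence
also `D`, to an even power. By quadratic reciprocity these primes include every odd `p` that
is not a square modulo `5`, so `|D|` is a square modulo `5`, contradicting `D ≡ ±2 (mod 5)`.
-/

theorem isSquare_natCast_of_even_padicValNat {R : Type*} [CommSemiring R] {n : ℕ} (hn : n ≠ 0)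
    (h : ∀ p : ℕ, p.Prime → ¬IsSquare (p : R) → Even (padicValNat p n)) : IsSquare (n : R) := by
  rw [← Nat.prod_factorization_pow_eq_self hn, Nat.cast_finsuppProd]
  refine SubmonoidClass.finsuppProd_mem (Submonoid.square R) _ _ fun p hp => ?_
  have hprime : p.Prime := Nat.prime_of_mem_primeFactors (Finsupp.mem_support_iff.mpr hp)
  rw [Submonoid.mem_square, Nat.cast_pow]
  by_cases hsq : IsSquare (p : R)
  · exact hsq.pow _
  · rw [Nat.factorization_def n hprime]
    exact (h p hprime hsq).isSquare_pow _

theorem isSquare_natCast_zmod_five_of_isSquare_five {p : ℕ} [Fact p.Prime] (hp : p ≠ 2)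
    (h : IsSquare (5 : ZMod p)) : IsSquare (p : ZMod 5) :=
  have : Fact (Nat.Prime 5) := ⟨by norm_num⟩
  (ZMod.exists_sq_eq_prime_iff_of_mod_four_eq_one (p := 5) (by norm_num) hp).mpr
    (by exact_mod_cast h)

theorem dvd_and_dvd_of_dvd_sq_sub_mul_sq {p : ℕ} [Fact p.Prime] {d b z : ℤ}
    (hd : ¬IsSquare (d : ZMod p)) (h : (p : ℤ) ∣ b ^ 2 - d * z ^ 2) :
    (p : ℤ) ∣ b ∧ (p : ℤ) ∣ z := by
  simp only [← ZMod.intCast_zmod_eq_zero_iff_dvd] at h ⊢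
  push_cast at h
  have hz : (z : ZMod p) = 0 := by
    by_contra hz
    exact hd ⟨b / z, by field_simp; linear_combination -h⟩
  rw [hz] at h
  exact ⟨pow_eq_zero_iff two_ne_zero |>.mp (by simpa using h), hz⟩

theorem even_padicValInt_sq_sub_mul_sq {p : ℕ} [Fact p.Prime] {d : ℤ}
    (hd : ¬IsSquare (d : ZMod p)) (b z : ℤ) (h0 : b ^ 2 - d * z ^ 2 ≠ 0) :
    Even (padicValInt p (b ^ 2 - d * z ^ 2)) := by
  induction hn : padicValInt p (b ^ 2 - d * z ^ 2) using Nat.strong_induction_on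
    generalizing b z with
  | _ n ih =>
    by_cases hdvd : (p : ℤ) ∣ b ^ 2 - d * z ^ 2
    · obtain ⟨⟨b, rfl⟩, ⟨z, rfl⟩⟩ := dvd_and_dvd_of_dvd_sq_sub_mul_sq hd hdvd
      have hfactor :
          (p * b) ^ 2 - d * (p * z) ^ 2 = ((p ^ 2 : ℕ) : ℤ) * (b ^ 2 - d * z ^ 2) := by
        push_cast; ring
      have hp0 : ((p ^ 2 : ℕ) : ℤ) ≠ 0 := by
        exact_mod_cast pow_ne_zero 2 (Fact.out : p.Prime).ne_zero
      have h0' : b ^ 2 - d * z ^ 2 ≠ 0 := right_ne_zero_of_mul (hfactor ▸ h0)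
      rw [hfactor, padicValInt.mul hp0 h0', padicValInt.of_nat, padicValNat.prime_pow] at hn
      exact hn ▸ even_two.add (ih _ (by omega) b z h0' rfl)
    · exact hn ▸ padicValInt.eq_zero_of_not_dvd hdvd ▸ Even.zero

theorem even_padicValInt_of_isCoprime_mul {p : ℕ} [hp : Fact p.Prime] {d D K b z : ℤ}
    (hd : ¬IsSquare (d : ZMod p)) (hcop : IsCoprime D K) (h : D * K = b ^ 2 - d * z ^ 2) :
    Even (padicValInt p D) := by
  by_cases hpD : (p : ℤ) ∣ D
  swap
  · exact padicValInt.eq_zero_of_not_dvd hpD ▸ Even.zero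
  rcases eq_or_ne D 0 with rfl | hD0
  · simp
  have hpK : ¬(p : ℤ) ∣ K := fun hpK =>
    (Nat.prime_iff_prime_int.mp hp.out).not_isUnit (hcop.isUnit_of_dvd' hpD hpK)
  have hK0 : K ≠ 0 := by rintro rfl; exact hpK (dvd_zero _)
  have := even_padicValInt_sq_sub_mul_sq hd b z (h ▸ mul_ne_zero hD0 hK0)
  rwa [← h, padicValInt.mul hD0 hK0, padicValInt.eq_zero_of_not_dvd hpK, add_zero] at this

theorem isSquare_natAbs_cast_zmod_five {D K b z : ℤ} (hD : Odd D) (hcop : IsCoprime D K)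
    (h : D * K = b ^ 2 - 5 * z ^ 2) : IsSquare (D.natAbs : ZMod 5) := by
  refine isSquare_natCast_of_even_padicValNat hD.natAbs.pos.ne' fun p hp hsq => ?_
  have := Fact.mk hp
  rcases eq_or_ne p 2 with rfl | hp2
  · exact padicValNat.eq_zero_of_not_dvd hD.natAbs.not_two_dvd_nat ▸ Even.zero
  · have h5 : ¬IsSquare ((5 : ℤ) : ZMod p) := fun h5 =>
      hsq (isSquare_natCast_zmod_five_of_isSquare_five hp2 (by exact_mod_cast h5))
    exact even_padicValInt_of_isCoprime_mul h5 hcop h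

/-- There are no integers `a, b, z` satisfying `(5a+2)(5a+3) = b² - 5z²`. -/
theorem no_solution_5a2_5a3 :
    ¬ ∃ a b z : ℤ, (5 * a + 2) * (5 * a + 3) = b ^ 2 - 5 * z ^ 2 := by
  rintro ⟨a, b, z, h⟩
  obtain ⟨D, K, hDK, hodd, hcop, hmod⟩ : ∃ D K : ℤ, D * K = b ^ 2 - 5 * z ^ 2 ∧ Odd D ∧
      IsCoprime D K ∧ (D.natAbs % 5 = 2 ∨ D.natAbs % 5 = 3) := by
    rcases Int.even_or_odd a with ⟨t, rfl⟩ | ⟨t, rfl⟩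
    · exact ⟨5 * (t + t) + 3, 5 * (t + t) + 2, by linear_combination h, ⟨5 * t + 1, by ring⟩,
        ⟨1, -1, by ring⟩, by omega⟩
    · exact ⟨5 * (2 * t + 1) + 2, 5 * (2 * t + 1) + 3, h, ⟨5 * t + 3, by ring⟩,
        ⟨-1, 1, by ring⟩, by omega⟩
  have hsq := isSquare_natAbs_cast_zmod_five hodd hcop hDK
  rw [← ZMod.natCast_mod] at hsq
  rcases hmod with hmod | hmod <;> rw [hmod] at hsq <;> revert hsq <;> decide
end

section
/- Let A = ⊕_{i≥0} A_i be a commutative ℕ-graded ℚ-algebra whose degree-zero part A₀ is one-dimensional, A₀ = ℚ·1, and let B ⊆ A be a graded ℚ-subalgebra containing 1 (so that B is spanned by its graded pieces B_i = B ∩ A_i, which satisfy B_i · B_j ⊆ B_{i+j}). If v ∈ A has nonzero degree-zero component v₀ ≠ 0 and v^k ∈ B for some integer k ≥ 1, then v ∈ B, i.e. every graded component of v lies in B. -/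
open DirectSum

section Aux

variable {A : Type*} [CommRing A] [Algebra ℚ A] (𝒜 : ℕ → Submodule ℚ A) [GradedAlgebra 𝒜]

/-- products of elements vanishing below degrees `n`, `m` vanish below `n + m`. -/
lemma auxA {n m : ℕ} {a b : A} (ha : ∀ i < n, GradedAlgebra.proj 𝒜 i a = 0)
    (hb : ∀ j < m, GradedAlgebra.proj 𝒜 j b = 0) :
    ∀ l < n + m, GradedAlgebra.proj 𝒜 l (a * b) = 0 := by
  classical
  intro l hl
  rw [GradedAlgebra.proj_apply, DirectSum.decompose_mul]
  rw [DirectSum.coe_mul_apply]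
  apply Finset.sum_eq_zero
  rintro ⟨i, j⟩ hij
  simp only [Finset.mem_filter, Finset.mem_product, DFinsupp.mem_support_iff] at hij
  obtain ⟨⟨hi, hj⟩, hijl⟩ := hij
  exfalso
  have hi' : n ≤ i := by
    by_contra h
    exact hi (Subtype.ext (ha i (lt_of_not_ge h)))
  have hj' : m ≤ j := by
    by_contra h
    exact hj (Subtype.ext (hb j (lt_of_not_ge h)))
  omega

/-- `proj 0` is multiplicative. -/
lemma auxB (a b : A) : GradedAlgebra.proj 𝒜 0 (a * b) =
    GradedAlgebra.proj 𝒜 0 a * GradedAlgebra.proj 𝒜 0 b := by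
  have ha0 : GradedAlgebra.proj 𝒜 0 a ∈ 𝒜 0 := SetLike.coe_mem _
  have hb0 : GradedAlgebra.proj 𝒜 0 b ∈ 𝒜 0 := SetLike.coe_mem _
  have hsa : ∀ i < 1, GradedAlgebra.proj 𝒜 i (a - GradedAlgebra.proj 𝒜 0 a) = 0 := by
    intro i hi
    interval_cases i
    rw [map_sub, sub_eq_zero]
    exact (DirectSum.decompose_of_mem_same 𝒜 ha0).symm
  have hsb : ∀ i < 1, GradedAlgebra.proj 𝒜 i (b - GradedAlgebra.proj 𝒜 0 b) = 0 := by
    intro i hi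
    interval_cases i
    rw [map_sub, sub_eq_zero]
    exact (DirectSum.decompose_of_mem_same 𝒜 hb0).symm
  have hsplit : a * b = GradedAlgebra.proj 𝒜 0 a * GradedAlgebra.proj 𝒜 0 b
      + (GradedAlgebra.proj 𝒜 0 a * (b - GradedAlgebra.proj 𝒜 0 b)
        + (a - GradedAlgebra.proj 𝒜 0 a) * b) := by ring
  rw [hsplit, map_add, map_add]
  have h1 : GradedAlgebra.proj 𝒜 0 (GradedAlgebra.proj 𝒜 0 a * (b - GradedAlgebra.proj 𝒜 0 b))
      = 0 :=
    auxA 𝒜 (n := 0) (m := 1) (fun i hi => absurd hi (Nat.not_lt_zero i)) hsb 0 (by omega)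
  have h2 : GradedAlgebra.proj 𝒜 0 ((a - GradedAlgebra.proj 𝒜 0 a) * b) = 0 :=
    auxA 𝒜 (n := 1) (m := 0) hsa (fun j hj => absurd hj (Nat.not_lt_zero j)) 0 (by omega)
  rw [h1, h2, add_zero, add_zero, GradedAlgebra.proj_apply,
    DirectSum.decompose_of_mem_same 𝒜 (SetLike.mul_mem_graded ha0 hb0)]

/-- `proj 0` of a power. -/
lemma auxP (a : A) : ∀ m : ℕ, GradedAlgebra.proj 𝒜 0 (a ^ m) = (GradedAlgebra.proj 𝒜 0 a) ^ m := by
  intro m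
  induction m with
  | zero =>
    simp only [pow_zero]
    rw [GradedAlgebra.proj_apply, DirectSum.decompose_of_mem_same 𝒜 (SetLike.one_mem_graded 𝒜)]
  | succ m ih => rw [pow_succ, auxB, ih, pow_succ]

end Aux

/-- Let `A = ⊕ Aᵢ` be a commutative `ℕ`-graded `ℚ`-algebra with `A₀ = ℚ·1`,
and let `B ⊆ A` be a graded `ℚ`-subalgebra (i.e. `B` contains all graded
components of each of its elements; note `1 ∈ B` automatically).  If `v ∈ A`
has nonzero degree-zero component and `v ^ k ∈ B` for some `k ≥ 1`, then
`v ∈ B`. -/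
theorem graded_component_membership {A : Type*} [CommRing A] [Algebra ℚ A]
    (𝒜 : ℕ → Submodule ℚ A) [GradedAlgebra 𝒜]
    (hA0 : 𝒜 0 = Submodule.span ℚ {(1 : A)})
    (B : Subalgebra ℚ A)
    (hB : ∀ b ∈ B, ∀ i : ℕ, GradedAlgebra.proj 𝒜 i b ∈ B)
    (v : A) (hv0 : GradedAlgebra.proj 𝒜 0 v ≠ 0)
    (k : ℕ) (hk : 1 ≤ k) (hvk : v ^ k ∈ B) :
    v ∈ B := by
  classical
  have hmem0 : ∀ a : A, GradedAlgebra.proj 𝒜 0 a ∈ B := by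
    intro a
    have h : GradedAlgebra.proj 𝒜 0 a ∈ 𝒜 0 := SetLike.coe_mem _
    rw [hA0, Submodule.mem_span_singleton] at h
    obtain ⟨c, hc⟩ := h
    rw [← hc]
    exact B.smul_mem B.one_mem c
  obtain ⟨c, hc⟩ : ∃ c : ℚ, c • (1 : A) = GradedAlgebra.proj 𝒜 0 v := by
    rw [← Submodule.mem_span_singleton, ← hA0]
    exact SetLike.coe_mem _
  have hcne : c ≠ 0 := by
    rintro rfl
    rw [zero_smul] at hc
    exact hv0 hc.symm
  have key : ∀ n, GradedAlgebra.proj 𝒜 n v ∈ B := by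
    intro n
    induction n using Nat.strong_induction_on with
    | _ n IH =>
      rcases Nat.eq_zero_or_pos n with rfl | hn
      · exact hmem0 v
      set w : A := ∑ i ∈ Finset.range n, GradedAlgebra.proj 𝒜 i v with hwdef
      have hwB : w ∈ B := Subalgebra.sum_mem B fun i hi => IH i (Finset.mem_range.mp hi)
      have hprojproj : ∀ i j : ℕ, GradedAlgebra.proj 𝒜 i (GradedAlgebra.proj 𝒜 j v)
          = if j = i then GradedAlgebra.proj 𝒜 j v else 0 := by
        intro i j
        by_cases h : j = i
        · subst h
          simp only [if_pos rfl]
          exact DirectSum.decompose_of_mem_same 𝒜 (SetLike.coe_mem _)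
        · rw [if_neg h]
          exact DirectSum.decompose_of_mem_ne 𝒜 (SetLike.coe_mem _) h
      have hwproj : ∀ i < n, GradedAlgebra.proj 𝒜 i w = GradedAlgebra.proj 𝒜 i v := by
        intro i hi
        rw [hwdef, map_sum]
        rw [Finset.sum_eq_single i (fun j _ hne => by rw [hprojproj, if_neg hne])
          (fun h => absurd (Finset.mem_range.mpr hi) h)]
        rw [hprojproj, if_pos rfl]
      have hwn : GradedAlgebra.proj 𝒜 n w = 0 := by
        rw [hwdef, map_sum]
        exact Finset.sum_eq_zero fun j hj => by
          rw [hprojproj, if_neg (Nat.ne_of_lt (Finset.mem_range.mp hj))]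
      set r : A := v - w with hrdef
      have hr : ∀ i < n, GradedAlgebra.proj 𝒜 i r = 0 := fun i hi => by
        rw [hrdef, map_sub, hwproj i hi, sub_self]
      set x : A := GradedAlgebra.proj 𝒜 n v with hxdef
      have hx : x ∈ 𝒜 n := SetLike.coe_mem _
      have hrn : GradedAlgebra.proj 𝒜 n r = x := by
        rw [hrdef, map_sub, hwn, sub_zero]
      set s : A := r - x with hsdef
      have hs : ∀ i < n + 1, GradedAlgebra.proj 𝒜 i s = 0 := by
        intro i hi
        rcases Nat.lt_or_ge i n with h | h
        · rw [hsdef, map_sub, hr i h, zero_sub, neg_eq_zero]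
          exact DirectSum.decompose_of_mem_ne 𝒜 hx (Nat.ne_of_gt h)
        · have hin : i = n := by omega
          subst hin
          rw [hsdef, map_sub, hrn, sub_eq_zero]
          exact (DirectSum.decompose_of_mem_same 𝒜 hx).symm
      -- the degree-0 part of w
      have hw0 : GradedAlgebra.proj 𝒜 0 w = c • (1 : A) := by rw [hwproj 0 hn, ← hc]
      -- expand v ^ k = (r + w) ^ k
      have hv : v = r + w := by rw [hrdef]; ring
      set f : ℕ → A := fun m =>
        GradedAlgebra.proj 𝒜 n (r ^ m * w ^ (k - m) * ((k.choose m : ℕ) : A)) with hfdef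
      have hsum : GradedAlgebra.proj 𝒜 n (v ^ k) = ∑ m ∈ Finset.range (k + 1), f m := by
        rw [hv, add_pow, map_sum]
      have hhigh : ∀ m, 2 ≤ m → f m = 0 := by
        intro m hm
        have h2 : ∀ i < n + n, GradedAlgebra.proj 𝒜 i (r ^ m) = 0 := by
          have hrr : ∀ i < n + n, GradedAlgebra.proj 𝒜 i (r * r) = 0 := auxA 𝒜 hr hr
          have : r ^ m = (r * r) * r ^ (m - 2) := by
            rw [← pow_two, ← pow_add]
            congr 1
            omega
          rw [this]
          intro i hi
          exact auxA 𝒜 (m := 0) hrr (fun j hj => absurd hj (Nat.not_lt_zero j)) i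
            (by omega)
        rw [hfdef]
        simp only [mul_assoc]
        exact auxA 𝒜 (m := 0) h2 (fun j hj => absurd hj (Nat.not_lt_zero j)) n (by omega)
      have hsplit : Finset.range (k + 1) = insert 0 (insert 1 (Finset.Ico 2 (k + 1))) := by
        ext m
        simp only [Finset.mem_range, Finset.mem_insert, Finset.mem_Ico]
        omega
      have hsum2 : GradedAlgebra.proj 𝒜 n (v ^ k) = f 0 + f 1 := by
        rw [hsum, hsplit, Finset.sum_insert (by simp), Finset.sum_insert (by simp),
          Finset.sum_eq_zero fun m hm => hhigh m (Finset.mem_Ico.mp hm).1, add_zero]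
      have hf0 : f 0 = GradedAlgebra.proj 𝒜 n (w ^ k) := by
        rw [hfdef]
        simp
      have hf1 : f 1 = ((k : ℚ) * c ^ (k - 1)) • x := by
        rw [hfdef]
        simp only [pow_one, Nat.choose_one_right]
        have hrw : r * w ^ (k - 1) * ((k : ℕ) : A) = (k : ℕ) • (r * w ^ (k - 1)) := by
          rw [nsmul_eq_mul, mul_comm]
        rw [hrw, map_nsmul]
        have hdecomp : r * w ^ (k - 1) = x * w ^ (k - 1) + s * w ^ (k - 1) := by
          rw [hsdef]; ring
        have hsw : GradedAlgebra.proj 𝒜 n (s * w ^ (k - 1)) = 0 :=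
          auxA 𝒜 (m := 0) hs (fun j hj => absurd hj (Nat.not_lt_zero j)) n (by omega)
        have hxw : GradedAlgebra.proj 𝒜 n (x * w ^ (k - 1))
            = x * GradedAlgebra.proj 𝒜 0 (w ^ (k - 1)) := by
          have := DirectSum.coe_decompose_mul_add_of_left_mem 𝒜 (i := n) (j := 0)
            (b := w ^ (k - 1)) hx
          rw [add_zero] at this
          exact this
        have hw0k : GradedAlgebra.proj 𝒜 0 (w ^ (k - 1)) = c ^ (k - 1) • (1 : A) := by
          rw [auxP, hw0, smul_pow, one_pow]
        rw [hdecomp, map_add, hsw, add_zero, hxw, hw0k, mul_smul_comm, mul_one,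
          ← Nat.cast_smul_eq_nsmul ℚ, smul_smul]
      have hne : ((k : ℚ) * c ^ (k - 1)) ≠ 0 :=
        mul_ne_zero (Nat.cast_ne_zero.mpr (by omega)) (pow_ne_zero _ hcne)
      have hxeq : x = ((k : ℚ) * c ^ (k - 1))⁻¹ •
          (GradedAlgebra.proj 𝒜 n (v ^ k) - GradedAlgebra.proj 𝒜 n (w ^ k)) := by
        rw [hsum2, hf0, hf1]
        rw [add_sub_cancel_left, smul_smul, inv_mul_cancel₀ hne, one_smul]
      rw [hxeq]
      exact B.smul_mem (B.sub_mem (hB _ hvk n) (hB _ (pow_mem hwB k) n)) _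
  have hv : v = ∑ i ∈ (DirectSum.decompose 𝒜 v).support, GradedAlgebra.proj 𝒜 i v :=
    (DirectSum.sum_support_decompose 𝒜 v).symm
  rw [hv]
  exact Subalgebra.sum_mem B fun i _ => key i
end

section
/- For every isometry g of the Mukai lattice Λ̃ (extended ℂ-linearly to Λ̃ ⊗ ℂ), one has g(Q_alg) ∩ (exp(Λ ⊗ ℚ)·Q_alg) ≠ ∅: there exist x, y ∈ Λ ⊗ ℂ both satisfying the period conditions (x·x = 0, x·x̄ > 0, and there exists C ∈ Λ with C·x = 0 and C·C > 0; similarly for y), a rational class B ∈ Λ ⊗ ℚ, and a nonzero scalar λ ∈ ℂ, such that g((0,x,0)) = λ · exp(B)((0,y,0)) = λ · (0, y, B·y). -/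
open Matrix

noncomputable section

/-- Reindexing of `(Fin 8 ⊕ Fin 8) ⊕ Fin 2 × Fin 3` as `Fin 22`. -/
def k3Index : ((Fin 8 ⊕ Fin 8) ⊕ Fin 2 × Fin 3) ≃ Fin 22 :=
  ((Equiv.sumCongr finSumFinEquiv finProdFinEquiv).trans finSumFinEquiv).trans
    (finCongr (by norm_num))

/-- The Gram matrix of the K3 lattice `Λ`: block diagonal with two copies of the
negative of the `E₈` Cartan matrix and three copies of the hyperbolic plane. -/
def K3Gram : Matrix (Fin 22) (Fin 22) ℤ :=
  Matrix.reindex k3Index k3Index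
    (Matrix.fromBlocks
      (Matrix.fromBlocks (-CartanMatrix.E₈) 0 0 (-CartanMatrix.E₈)) 0 0
      (Matrix.blockDiagonal fun _ : Fin 3 => !![0, 1; 1, 0]))

/-- The K3 intersection pairing, with coefficients extended to a commutative ring `R`. -/
def lamForm (R : Type) [CommRing R] (v w : Fin 22 → R) : R :=
  v ⬝ᵥ (K3Gram.map (Int.cast : ℤ → R)).mulVec w

/-- The Mukai pairing on `Λ̃ ⊗ R = R ⊕ (Λ ⊗ R) ⊕ R`:
`⟨(r,c,s),(r',c',s')⟩ = c·c' - r*s' - r'*s`. -/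
def mukaiPair (R : Type) [CommRing R] (v w : R × (Fin 22 → R) × R) : R :=
  lamForm R v.2.1 w.2.1 - v.1 * w.2.2 - w.1 * v.2.2

/-- The B-field shift `exp(B) : (r,c,s) ↦ (r, c + r·B, s + B·c + (B·B/2)·r)`. -/
def mukaiExp (R : Type) [Field R] (B : Fin 22 → R) (v : R × (Fin 22 → R) × R) :
    R × (Fin 22 → R) × R :=
  (v.1, v.2.1 + v.1 • B, v.2.2 + lamForm R B v.2.1 + lamForm R B B / 2 * v.1)

/-- Coercion of an integral class in `Λ` to `Λ ⊗ ℂ`. -/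
def intVecC (v : Fin 22 → ℤ) : Fin 22 → ℂ := fun i => (v i : ℂ)

/-- Coercion of a rational class in `Λ ⊗ ℚ` to `Λ ⊗ ℂ`. -/
def ratVecC (v : Fin 22 → ℚ) : Fin 22 → ℂ := fun i => (v i : ℂ)

/-- Componentwise complex conjugation on `Λ ⊗ ℂ`. -/
def conjVec (x : Fin 22 → ℂ) : Fin 22 → ℂ := fun i => (starRingEnd ℂ) (x i)

/-- `x ∈ Λ ⊗ ℂ` is a period point: `x·x = 0` and `x·x̄ > 0`. -/
def IsPeriod (x : Fin 22 → ℂ) : Prop :=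
  lamForm ℂ x x = 0 ∧ 0 < (lamForm ℂ x (conjVec x)).re

/-- `x` is an algebraic period point: a period point admitting an integral class `C`
with `C·x = 0` and `C·C > 0`. -/
def IsAlgPeriod (x : Fin 22 → ℂ) : Prop :=
  IsPeriod x ∧ ∃ C : Fin 22 → ℤ, lamForm ℂ (intVecC C) x = 0 ∧ 0 < lamForm ℤ C C

/-- The embedding of the integral Mukai lattice `Λ̃` into `Λ̃ ⊗ ℂ`. -/
def iMukai (m : ℤ × (Fin 22 → ℤ) × ℤ) : ℂ × (Fin 22 → ℂ) × ℂ :=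
  ((m.1 : ℂ), intVecC m.2.1, (m.2.2 : ℂ))

/-!
The rank coordinate of `g` on `Λ` is an integral linear functional, so the positive definite
sublattice `⟨2⟩³ ⊂ U³` spanned by the vectors `a_k + b_k` of the three hyperbolic planes contains,
in its kernel, orthogonal classes `e, f` of positive square. Then `g (0, e, 0) = (0, A, P)` and
`g (0, f, 0) = (0, A', P')` with `A, A'` orthogonal of the same squares, and for `μ = √(e² / f²)`
both `x = e + iμ f` and `y = A + iμ A'` are periods. They are algebraic because any two classes of
`Λ` are orthogonal to a class of positive square in `⟨2⟩³`. Finally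
`B = (P / A²) A + (P' / A'²) A'` has `B·y = P + iμ P'`, that is `g (0, x, 0) = (0, y, B·y)`.
-/

section LamForm

variable {R : Type} [CommRing R]

theorem K3Gram_isSymm : K3Gram.IsSymm := by
  refine Matrix.IsSymm.reindex (Matrix.IsSymm.fromBlocks ?_ (by simp) ?_) _
  · exact Matrix.IsSymm.fromBlocks (by decide) (by simp) (by decide)
  · decide

theorem lamForm_comm (v w : Fin 22 → R) : lamForm R v w = lamForm R w v := by
  have hsymm : (K3Gram.map (Int.cast : ℤ → R)).IsSymm := K3Gram_isSymm.map _
  rw [lamForm, lamForm, dotProduct_mulVec, dotProduct_comm, ← mulVec_transpose, hsymm.eq]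

theorem lamForm_add_left (u v w : Fin 22 → R) :
    lamForm R (u + v) w = lamForm R u w + lamForm R v w := by
  simp [lamForm, add_dotProduct]

theorem lamForm_sum_left {ι : Type} (s : Finset ι) (v : ι → Fin 22 → R) (w : Fin 22 → R) :
    lamForm R (∑ i ∈ s, v i) w = ∑ i ∈ s, lamForm R (v i) w := by
  simp [lamForm, sum_dotProduct]

theorem lamForm_smul_left (a : R) (v w : Fin 22 → R) :
    lamForm R (a • v) w = a * lamForm R v w := by
  simp [lamForm, smul_dotProduct]

theorem lamForm_add_right (u v w : Fin 22 → R) :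
    lamForm R u (v + w) = lamForm R u v + lamForm R u w := by
  simp [lamForm, mulVec_add, dotProduct_add]

theorem lamForm_smul_right (a : R) (v w : Fin 22 → R) :
    lamForm R v (a • w) = a * lamForm R v w := by
  simp [lamForm, mulVec_smul, dotProduct_smul]

theorem lamForm_add_smul_add_smul (v w : Fin 22 → R) (s t : R) :
    lamForm R (v + s • w) (v + t • w) =
      lamForm R v v + (s + t) * lamForm R v w + s * t * lamForm R w w := by
  rw [lamForm_add_left, lamForm_add_right, lamForm_add_right, lamForm_smul_left,
    lamForm_smul_left, lamForm_smul_right, lamForm_smul_right, lamForm_comm w v]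
  ring

theorem lamForm_map {S : Type} [CommRing S] (f : R →+* S) (v w : Fin 22 → R) :
    lamForm S (fun i => f (v i)) (fun i => f (w i)) = f (lamForm R v w) := by
  simp [lamForm, dotProduct, mulVec, map_sum, map_mul, map_intCast]

theorem lamForm_intVecC (v w : Fin 22 → ℤ) :
    lamForm ℂ (intVecC v) (intVecC w) = lamForm ℤ v w :=
  lamForm_map (Int.castRingHom ℂ) v w

end LamForm

/-- Under `k3Index`, the `k`-th hyperbolic plane has its isotropic basis `a_k, b_k`
(with `a_k·b_k = 1`) at positions `hypFst k = 16 + k` and `hypSnd k = 19 + k`. -/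
def hypFst (k : Fin 3) : Fin 22 := ⟨16 + k, by omega⟩

def hypSnd (k : Fin 3) : Fin 22 := ⟨19 + k, by omega⟩

theorem K3Gram_hypFst_apply (k : Fin 3) (j : Fin 22) :
    K3Gram (hypFst k) j = if j = hypSnd k then 1 else 0 := by
  revert k j; decide

theorem K3Gram_hypSnd_apply (k : Fin 3) (j : Fin 22) :
    K3Gram (hypSnd k) j = if j = hypFst k then 1 else 0 := by
  revert k j; decide

section HypDiag

variable {R : Type} [CommRing R]

theorem lamForm_single_one_left (i : Fin 22) (v : Fin 22 → R) :
    lamForm R (Pi.single i 1) v = ∑ j, (K3Gram i j : R) * v j := by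
  rw [lamForm, single_dotProduct, one_mul]
  rfl

variable (R) in
def hypDiag : (Fin 3 → R) →ₗ[R] Fin 22 → R :=
  Fintype.linearCombination R fun k => Pi.single (hypFst k) 1 + Pi.single (hypSnd k) 1

theorem lamForm_hypDiag_left (c : Fin 3 → R) (v : Fin 22 → R) :
    lamForm R (hypDiag R c) v = c ⬝ᵥ fun k => v (hypFst k) + v (hypSnd k) := by
  simp [hypDiag, Fintype.linearCombination_apply, lamForm_sum_left, lamForm_add_left,
    lamForm_smul_left, lamForm_single_one_left, K3Gram_hypFst_apply, K3Gram_hypSnd_apply,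
    dotProduct, add_comm, mul_add]

theorem hypDiag_apply_hypFst (c : Fin 3 → R) (k : Fin 3) : hypDiag R c (hypFst k) = c k := by
  fin_cases k <;> simp [hypDiag, Fintype.linearCombination_apply, Fin.sum_univ_three,
    Pi.single_apply, hypFst, hypSnd]

theorem hypDiag_apply_hypSnd (c : Fin 3 → R) (k : Fin 3) : hypDiag R c (hypSnd k) = c k := by
  fin_cases k <;> simp [hypDiag, Fintype.linearCombination_apply, Fin.sum_univ_three,
    Pi.single_apply, hypFst, hypSnd]

theorem lamForm_hypDiag_hypDiag (c c' : Fin 3 → R) :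
    lamForm R (hypDiag R c) (hypDiag R c') = 2 * (c ⬝ᵥ c') := by
  simp only [lamForm_hypDiag_left, hypDiag_apply_hypFst, hypDiag_apply_hypSnd, dotProduct,
    Finset.mul_sum]
  exact Finset.sum_congr rfl fun k _ => by ring

end HypDiag

theorem lamForm_hypDiag_self_pos {c : Fin 3 → ℤ} (hc : c ≠ 0) :
    0 < lamForm ℤ (hypDiag ℤ c) (hypDiag ℤ c) := by
  rw [lamForm_hypDiag_hypDiag]
  have := dotProduct_self_star_pos_iff.mpr hc
  rw [star_trivial] at this
  omega

theorem exists_ne_zero_dotProduct_eq_zero₂ {R : Type} [CommRing R] [IsDomain R]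
    (d₁ d₂ : Fin 3 → R) : ∃ c ≠ 0, c ⬝ᵥ d₁ = 0 ∧ c ⬝ᵥ d₂ = 0 := by
  obtain ⟨c, hc, hMc⟩ := exists_mulVec_eq_zero_iff.mpr
    (det_eq_zero_of_row_eq_zero (A := Matrix.of ![d₁, d₂, 0]) 2 fun _ => rfl)
  refine ⟨c, hc, ?_, ?_⟩
  · simpa [dotProduct_comm] using congrFun hMc 0
  · simpa [dotProduct_comm] using congrFun hMc 1

theorem exists_orthogonal_lamForm_pos (v w : Fin 22 → ℤ) :
    ∃ C, lamForm ℤ C v = 0 ∧ lamForm ℤ C w = 0 ∧ 0 < lamForm ℤ C C := by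
  obtain ⟨c, hc, hcv, hcw⟩ := exists_ne_zero_dotProduct_eq_zero₂
    (fun k => v (hypFst k) + v (hypSnd k)) (fun k => w (hypFst k) + w (hypSnd k))
  exact ⟨hypDiag ℤ c, by rwa [lamForm_hypDiag_left], by rwa [lamForm_hypDiag_left],
    lamForm_hypDiag_self_pos hc⟩

theorem exists_orthogonal_pair_in_ker (ℓ : (Fin 22 → ℤ) →ₗ[ℤ] ℤ) :
    ∃ e f, ℓ e = 0 ∧ ℓ f = 0 ∧ lamForm ℤ e f = 0 ∧ 0 < lamForm ℤ e e ∧ 0 < lamForm ℤ f f := by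
  set d : Fin 3 → ℤ := fun k => ℓ (hypDiag ℤ fun j => if k = j then 1 else 0)
  have hℓ : ∀ c, ℓ (hypDiag ℤ c) = c ⬝ᵥ d := fun c => by
    simpa [dotProduct] using LinearMap.pi_apply_eq_sum_univ (ℓ ∘ₗ hypDiag ℤ) c
  obtain ⟨ce, hce, hced, -⟩ := exists_ne_zero_dotProduct_eq_zero₂ d d
  obtain ⟨cf, hcf, hcfd, hcfe⟩ := exists_ne_zero_dotProduct_eq_zero₂ d ce
  refine ⟨hypDiag ℤ ce, hypDiag ℤ cf, by rw [hℓ, hced], by rw [hℓ, hcfd], ?_,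
    lamForm_hypDiag_self_pos hce, lamForm_hypDiag_self_pos hcf⟩
  rw [lamForm_hypDiag_hypDiag, dotProduct_comm, hcfe, mul_zero]

theorem isPeriod_intVecC_add_smul {v w : Fin 22 → ℤ} {μ : ℝ} (hvw : lamForm ℤ v w = 0)
    (hv : 0 < lamForm ℤ v v) (hμ : μ ^ 2 * lamForm ℤ w w = lamForm ℤ v v) :
    IsPeriod (intVecC v + ((μ : ℂ) * Complex.I) • intVecC w) := by
  have hμC : (μ : ℂ) ^ 2 * (lamForm ℤ w w : ℂ) = lamForm ℤ v v := by exact_mod_cast hμ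
  have hconj : conjVec (intVecC v + ((μ : ℂ) * Complex.I) • intVecC w) =
      intVecC v + (-((μ : ℂ) * Complex.I)) • intVecC w := by
    funext i
    simp [conjVec, intVecC]
  constructor
  · rw [lamForm_add_smul_add_smul, lamForm_intVecC, lamForm_intVecC, lamForm_intVecC, hvw]
    linear_combination -hμC + (μ : ℂ) ^ 2 * (lamForm ℤ w w : ℂ) * Complex.I_sq
  · have hsum : lamForm ℂ (intVecC v + ((μ : ℂ) * Complex.I) • intVecC w)
        (intVecC v + (-((μ : ℂ) * Complex.I)) • intVecC w) = ((2 * lamForm ℤ v v : ℤ) : ℂ) := by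
      rw [lamForm_add_smul_add_smul, lamForm_intVecC, lamForm_intVecC, lamForm_intVecC, hvw]
      push_cast
      linear_combination hμC - (μ : ℂ) ^ 2 * (lamForm ℤ w w : ℂ) * Complex.I_sq
    rw [hconj, hsum, Complex.intCast_re]
    exact_mod_cast (by omega : 0 < 2 * lamForm ℤ v v)

theorem isAlgPeriod_intVecC_add_smul {v w : Fin 22 → ℤ} {μ : ℝ} (hvw : lamForm ℤ v w = 0)
    (hv : 0 < lamForm ℤ v v) (hμ : μ ^ 2 * lamForm ℤ w w = lamForm ℤ v v) :
    IsAlgPeriod (intVecC v + ((μ : ℂ) * Complex.I) • intVecC w) := by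
  obtain ⟨C, hCv, hCw, hC⟩ := exists_orthogonal_lamForm_pos v w
  refine ⟨isPeriod_intVecC_add_smul hvw hv hμ, C, ?_, hC⟩
  rw [lamForm_add_right, lamForm_smul_right, lamForm_intVecC, lamForm_intVecC, hCv, hCw]
  simp

theorem exists_ratVecC_lamForm_eq {v w : Fin 22 → ℤ} (hvw : lamForm ℤ v w = 0)
    (hv : lamForm ℤ v v ≠ 0) (hw : lamForm ℤ w w ≠ 0) (a b : ℚ) :
    ∃ B : Fin 22 → ℚ, lamForm ℂ (ratVecC B) (intVecC v) = a ∧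
      lamForm ℂ (ratVecC B) (intVecC w) = b := by
  set α : ℚ := a / lamForm ℤ v v
  set β : ℚ := b / lamForm ℤ w w
  have hB : ratVecC (α • (fun i => (v i : ℚ)) + β • fun i => (w i : ℚ)) =
      (α : ℂ) • intVecC v + (β : ℂ) • intVecC w := by
    funext i
    simp [ratVecC, intVecC]
  refine ⟨α • (fun i => (v i : ℚ)) + β • fun i => (w i : ℚ), ?_, ?_⟩ <;>
  · simp only [hB, lamForm_add_left, lamForm_smul_left, lamForm_intVecC, lamForm_comm w v, hvw,
      α, β]
    push_cast
    field_simp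
    ring

theorem iMukai_add (m m' : ℤ × (Fin 22 → ℤ) × ℤ) : iMukai (m + m') = iMukai m + iMukai m' := by
  simp [iMukai, intVecC, Prod.ext_iff, funext_iff]

theorem iMukai_injective : Function.Injective iMukai := by
  rintro ⟨r, c, s⟩ ⟨r', c', s'⟩ h
  simp only [iMukai, intVecC, Prod.mk.injEq, Int.cast_inj, funext_iff] at h
  obtain ⟨rfl, hc, rfl⟩ := h
  simp only [Prod.mk.injEq, true_and, and_true]
  exact funext hc

theorem mukaiPair_iMukai (m m' : ℤ × (Fin 22 → ℤ) × ℤ) :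
    mukaiPair ℂ (iMukai m) (iMukai m') = mukaiPair ℤ m m' := by
  simp [mukaiPair, iMukai, lamForm_intVecC]

theorem exists_integral_isometry (g : (ℂ × (Fin 22 → ℂ) × ℂ) →ₗ[ℂ] ℂ × (Fin 22 → ℂ) × ℂ)
    (hiso : ∀ v w, mukaiPair ℂ (g v) (g w) = mukaiPair ℂ v w)
    (hint : ∀ m, ∃ m', g (iMukai m) = iMukai m') :
    ∃ G : (ℤ × (Fin 22 → ℤ) × ℤ) →ₗ[ℤ] ℤ × (Fin 22 → ℤ) × ℤ,
      (∀ m, g (iMukai m) = iMukai (G m)) ∧ ∀ m m', mukaiPair ℤ (G m) (G m') = mukaiPair ℤ m m' := by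
  choose G hG using hint
  have hGadd : ∀ m m', G (m + m') = G m + G m' := fun m m' =>
    iMukai_injective (by rw [iMukai_add, ← hG, ← hG, ← hG, iMukai_add, map_add])
  refine ⟨(AddMonoidHom.mk' G hGadd).toIntLinearMap, hG, fun m m' => ?_⟩
  have h := hiso (iMukai m) (iMukai m')
  rw [hG, hG, mukaiPair_iMukai, mukaiPair_iMukai] at h
  exact_mod_cast h

theorem isometry_meets_twisted_alg_periods_general
    (g : (ℂ × (Fin 22 → ℂ) × ℂ) ≃ₗ[ℂ] ℂ × (Fin 22 → ℂ) × ℂ)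
    (hiso : ∀ v w, mukaiPair ℂ (g v) (g w) = mukaiPair ℂ v w)
    (hint : ∀ m : ℤ × (Fin 22 → ℤ) × ℤ, ∃ m' : ℤ × (Fin 22 → ℤ) × ℤ, g (iMukai m) = iMukai m') :
    ∃ (x y : Fin 22 → ℂ) (B : Fin 22 → ℚ) (lam : ℂ),
      lam ≠ 0 ∧ IsAlgPeriod x ∧ IsAlgPeriod y ∧
      g ((0 : ℂ), x, (0 : ℂ)) = lam • ((0 : ℂ), y, lamForm ℂ (ratVecC B) y) := by
  obtain ⟨G, hG, hGpair⟩ := exists_integral_isometry g.toLinearMap hiso hint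
  simp only [LinearEquiv.coe_coe] at hG
  obtain ⟨e, f, hGe, hGf, hef, he, hf⟩ := exists_orthogonal_pair_in_ker
    (LinearMap.fst ℤ ℤ _ ∘ₗ G ∘ₗ LinearMap.inr ℤ ℤ _ ∘ₗ LinearMap.inl ℤ _ ℤ)
  obtain ⟨A, P, hA⟩ : ∃ A P, G (0, e, 0) = (0, A, P) := ⟨_, _, Prod.ext hGe rfl⟩
  obtain ⟨A', P', hA'⟩ : ∃ A' P', G (0, f, 0) = (0, A', P') := ⟨_, _, Prod.ext hGf rfl⟩
  have hAA : lamForm ℤ A A = lamForm ℤ e e := by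
    simpa [mukaiPair, hA] using hGpair (0, e, 0) (0, e, 0)
  have hAA' : lamForm ℤ A A' = 0 := by
    simpa [mukaiPair, hA, hA', hef] using hGpair (0, e, 0) (0, f, 0)
  have hA'A' : lamForm ℤ A' A' = lamForm ℤ f f := by
    simpa [mukaiPair, hA'] using hGpair (0, f, 0) (0, f, 0)
  set μ := Real.sqrt (lamForm ℤ e e / lamForm ℤ f f)
  have hμ : μ ^ 2 * lamForm ℤ f f = lamForm ℤ e e := by
    rw [Real.sq_sqrt (by positivity), div_mul_cancel₀ _ (by exact_mod_cast hf.ne')]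
  obtain ⟨B, hBA, hBA'⟩ := exists_ratVecC_lamForm_eq hAA' (hAA ▸ he.ne') (hA'A' ▸ hf.ne') P P'
  refine ⟨_, _, B, 1, one_ne_zero, isAlgPeriod_intVecC_add_smul hef he hμ,
    isAlgPeriod_intVecC_add_smul hAA' (hAA ▸ he) (hAA ▸ hA'A' ▸ hμ), ?_⟩
  have hx : ((0 : ℂ), intVecC e + ((μ : ℂ) * Complex.I) • intVecC f, (0 : ℂ)) =
      iMukai (0, e, 0) + ((μ : ℂ) * Complex.I) • iMukai (0, f, 0) := by
    simp [iMukai]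
  rw [hx, map_add, map_smul, hG, hG, hA, hA', one_smul, lamForm_add_right, lamForm_smul_right,
    hBA, hBA']
  simp [iMukai]

/-- For every isometry `g` of the Mukai lattice `Λ̃` (given as an isometry of `Λ̃ ⊗ ℂ`
preserving the integral lattice in both directions) one has
`g(Q_alg) ∩ (exp(Λ ⊗ ℚ)·Q_alg) ≠ ∅`: there are algebraic period points `x, y`, a rational
class `B ∈ Λ ⊗ ℚ` and a nonzero scalar `λ` with `g((0,x,0)) = λ·(0, y, B·y)`. -/
theorem isometry_meets_twisted_alg_periods
    (g : (ℂ × (Fin 22 → ℂ) × ℂ) ≃ₗ[ℂ] ℂ × (Fin 22 → ℂ) × ℂ)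
    (hiso : ∀ v w, mukaiPair ℂ (g v) (g w) = mukaiPair ℂ v w)
    (hint : ∀ m : ℤ × (Fin 22 → ℤ) × ℤ, ∃ m' : ℤ × (Fin 22 → ℤ) × ℤ, g (iMukai m) = iMukai m')
    (hint' : ∀ m : ℤ × (Fin 22 → ℤ) × ℤ, ∃ m' : ℤ × (Fin 22 → ℤ) × ℤ,
      g.symm (iMukai m) = iMukai m') :
    ∃ (x y : Fin 22 → ℂ) (B : Fin 22 → ℚ) (lam : ℂ),
      lam ≠ 0 ∧ IsAlgPeriod x ∧ IsAlgPeriod y ∧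
      g ((0 : ℂ), x, (0 : ℂ)) = lam • ((0 : ℂ), y, lamForm ℂ (ratVecC B) y) :=
  isometry_meets_twisted_alg_periods_general g hiso hint
end
end

section
/- For every class B ∈ Λ there exists an algebraic period point orthogonal to B: there exists x ∈ Λ ⊗ ℂ with x·x = 0, x·x̄ > 0, and B·x = 0, and moreover there exists C ∈ Λ with C·x = 0 and C·C > 0. Consequently, exp(B) fixes the period point (0,x,0) ∈ Λ̃ ⊗ ℂ, so exp(B)(Q_alg) ∩ Q_alg ≠ ∅. -/
open Matrix

noncomputable section

def pv (a b : Fin 22) : Fin 22 → ℤ := fun i => (if i = a then 1 else 0) + (if i = b then 1 else 0)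

lemma hG1 : K3Gram.mulVec (pv 16 19) = pv 16 19 := by decide
lemma hG2 : K3Gram.mulVec (pv 17 20) = pv 17 20 := by decide
lemma hG3 : K3Gram.mulVec (pv 18 21) = pv 18 21 := by decide

lemma lam_pv {R : Type} [CommRing R] (v : Fin 22 → R) (a b : Fin 22)
    (h : K3Gram.mulVec (pv a b) = pv a b) :
    lamForm R v (fun i => ((pv a b i : ℤ) : R)) = v a + v b := by
  have hm : (K3Gram.map (Int.cast : ℤ → R)).mulVec (fun i => ((pv a b i : ℤ) : R))
      = fun i => ((pv a b i : ℤ) : R) := by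
    funext i
    have h2 := congrFun h i
    simp only [Matrix.mulVec, dotProduct, Matrix.map_apply] at h2 ⊢
    calc (∑ k, ((K3Gram i k : R)) * ((pv a b k : ℤ) : R))
        = ((∑ k, K3Gram i k * pv a b k : ℤ) : R) := by push_cast; ring
      _ = _ := by rw [h2]
  unfold lamForm
  rw [hm]
  simp [dotProduct, pv, mul_add, Finset.sum_add_distrib, Finset.sum_ite_eq',
    apply_ite (Int.cast : ℤ → R)]

lemma lam_add {R : Type} [CommRing R] (v w w' : Fin 22 → R) :
    lamForm R v (w + w') = lamForm R v w + lamForm R v w' := by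
  simp [lamForm, Matrix.mulVec_add, dotProduct_add]

lemma lam_smul {R : Type} [CommRing R] (v w : Fin 22 → R) (c : R) :
    lamForm R v (c • w) = c * lamForm R v w := by
  simp [lamForm, Matrix.mulVec_smul, dotProduct_smul]

lemma lam_comb {R : Type} [CommRing R] (v : Fin 22 → R) (e1 e2 e3 : R) :
    lamForm R v (fun i => e1 * ((pv 16 19 i : ℤ) : R) + e2 * ((pv 17 20 i : ℤ) : R)
      + e3 * ((pv 18 21 i : ℤ) : R))
    = e1 * (v 16 + v 19) + e2 * (v 17 + v 20) + e3 * (v 18 + v 21) := by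
  have : (fun i => e1 * ((pv 16 19 i : ℤ) : R) + e2 * ((pv 17 20 i : ℤ) : R)
      + e3 * ((pv 18 21 i : ℤ) : R))
      = (e1 • fun i => ((pv 16 19 i : ℤ) : R)) + ((e2 • fun i => ((pv 17 20 i : ℤ) : R))
        + (e3 • fun i => ((pv 18 21 i : ℤ) : R))) := by
    funext i; simp [mul_add]; ring
  rw [this, lam_add, lam_add, lam_smul, lam_smul, lam_smul,
    lam_pv v 16 19 hG1, lam_pv v 17 20 hG2, lam_pv v 18 21 hG3]
  ring

lemma build (B : Fin 22 → ℤ) (c1 c2 c3 : ℂ)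
    (hiso : c1 ^ 2 + c2 ^ 2 + c3 ^ 2 = 0)
    (hpos : 0 < (c1 * (starRingEnd ℂ) c1 + c2 * (starRingEnd ℂ) c2
      + c3 * (starRingEnd ℂ) c3).re)
    (horth : ((B 16 + B 19 : ℤ) : ℂ) * c1 + ((B 17 + B 20 : ℤ) : ℂ) * c2
      + ((B 18 + B 21 : ℤ) : ℂ) * c3 = 0)
    (C : Fin 22 → ℤ) (hCC : 0 < lamForm ℤ C C)
    (hCx : ((C 16 + C 19 : ℤ) : ℂ) * c1 + ((C 17 + C 20 : ℤ) : ℂ) * c2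
      + ((C 18 + C 21 : ℤ) : ℂ) * c3 = 0) :
    ∃ x : Fin 22 → ℂ,
      lamForm ℂ x x = 0 ∧ 0 < (lamForm ℂ x (conjVec x)).re ∧
      lamForm ℂ (intVecC B) x = 0 ∧
      (∃ C : Fin 22 → ℤ, lamForm ℂ (intVecC C) x = 0 ∧ 0 < lamForm ℤ C C) ∧
      mukaiExp ℂ (intVecC B) ((0 : ℂ), x, (0 : ℂ)) = ((0 : ℂ), x, (0 : ℂ)) := by
  have hBx : lamForm ℂ (intVecC B) (fun i => c1 * ((pv 16 19 i : ℤ) : ℂ)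
      + c2 * ((pv 17 20 i : ℤ) : ℂ) + c3 * ((pv 18 21 i : ℤ) : ℂ)) = 0 := by
    rw [lam_comb]
    push_cast at horth
    simp only [intVecC]
    linear_combination horth
  refine ⟨fun i => c1 * ((pv 16 19 i : ℤ) : ℂ) + c2 * ((pv 17 20 i : ℤ) : ℂ)
      + c3 * ((pv 18 21 i : ℤ) : ℂ), ?_, ?_, hBx, ⟨C, ?_, hCC⟩, ?_⟩
  · rw [lam_comb]
    simp (config := { decide := true }) only [pv]
    push_cast
    linear_combination 2 * hiso
  · have hcv : conjVec (fun i => c1 * ((pv 16 19 i : ℤ) : ℂ)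
        + c2 * ((pv 17 20 i : ℤ) : ℂ) + c3 * ((pv 18 21 i : ℤ) : ℂ))
        = fun i => (starRingEnd ℂ) c1 * ((pv 16 19 i : ℤ) : ℂ)
          + (starRingEnd ℂ) c2 * ((pv 17 20 i : ℤ) : ℂ)
          + (starRingEnd ℂ) c3 * ((pv 18 21 i : ℤ) : ℂ) := by
      funext i
      simp [conjVec]
    rw [hcv, lam_comb]
    simp (config := { decide := true }) only [pv]
    push_cast
    have he : (starRingEnd ℂ) c1 * (c1 * 1 + c2 * 0 + c3 * 0 + (c1 * 1 + c2 * 0 + c3 * 0))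
        + (starRingEnd ℂ) c2 * (c1 * 0 + c2 * 1 + c3 * 0 + (c1 * 0 + c2 * 1 + c3 * 0))
        + (starRingEnd ℂ) c3 * (c1 * 0 + c2 * 0 + c3 * 1 + (c1 * 0 + c2 * 0 + c3 * 1))
        = (c1 * (starRingEnd ℂ) c1 + c2 * (starRingEnd ℂ) c2 + c3 * (starRingEnd ℂ) c3)
          + (c1 * (starRingEnd ℂ) c1 + c2 * (starRingEnd ℂ) c2 + c3 * (starRingEnd ℂ) c3) := by
      ring
    rw [he, Complex.add_re]
    linarith
  · rw [lam_comb]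
    push_cast at hCx
    simp only [intVecC]
    linear_combination hCx
  · simp only [mukaiExp, hBx, Prod.mk.injEq]
    refine ⟨trivial, by funext i; simp, by ring⟩

lemma case2 (b1 b2 b3 : ℤ) (h : ¬(b1 = 0 ∧ b2 = 0)) :
    ∃ c1 c2 c3 : ℂ, c1 ^ 2 + c2 ^ 2 + c3 ^ 2 = 0 ∧
      0 < (c1 * (starRingEnd ℂ) c1 + c2 * (starRingEnd ℂ) c2
        + c3 * (starRingEnd ℂ) c3).re ∧
      (b1 : ℂ) * c1 + (b2 : ℂ) * c2 + (b3 : ℂ) * c3 = 0 := by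
  have h0 : (0 : ℝ) ≤ ((b1 ^ 2 + b2 ^ 2 + b3 ^ 2 : ℤ) : ℝ) := by positivity
  set s : ℝ := Real.sqrt ((b1 ^ 2 + b2 ^ 2 + b3 ^ 2 : ℤ) : ℝ) with hsdef
  have hs2 : ((s : ℂ)) ^ 2 = (b1 : ℂ) ^ 2 + (b2 : ℂ) ^ 2 + (b3 : ℂ) ^ 2 := by
    have h1 : s ^ 2 = ((b1 ^ 2 + b2 ^ 2 + b3 ^ 2 : ℤ) : ℝ) := Real.sq_sqrt h0
    calc ((s : ℂ)) ^ 2 = ((s ^ 2 : ℝ) : ℂ) := by push_cast; ring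
      _ = _ := by rw [h1]; push_cast; ring
  have hI : Complex.I ^ 2 = -1 := Complex.I_sq
  have hz : (b1 ^ 2 + b2 ^ 2 : ℤ) ≠ 0 := by
    rcases not_and_or.mp h with h' | h' <;> positivity
  have hc3ne : Complex.I * (-((b1 : ℂ) ^ 2 + (b2 : ℂ) ^ 2)) ≠ 0 := by
    refine mul_ne_zero Complex.I_ne_zero (neg_ne_zero.mpr ?_)
    have : ((b1 ^ 2 + b2 ^ 2 : ℤ) : ℂ) ≠ 0 := Int.cast_ne_zero.mpr hz
    push_cast at this
    exact this
  refine ⟨(s : ℂ) * (b2 : ℂ) + Complex.I * ((b1 : ℂ) * (b3 : ℂ)),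
    -(s : ℂ) * (b1 : ℂ) + Complex.I * ((b2 : ℂ) * (b3 : ℂ)),
    Complex.I * (-((b1 : ℂ) ^ 2 + (b2 : ℂ) ^ 2)), ?_, ?_, ?_⟩
  · linear_combination ((b1 : ℂ) ^ 2 + (b2 : ℂ) ^ 2) * hs2
      + ((b1 : ℂ) ^ 2 + (b2 : ℂ) ^ 2) * ((b1 : ℂ) ^ 2 + (b2 : ℂ) ^ 2 + (b3 : ℂ) ^ 2) * hI
  · have hre : ∀ z1 z2 z3 : ℂ, (z1 * (starRingEnd ℂ) z1 + z2 * (starRingEnd ℂ) z2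
        + z3 * (starRingEnd ℂ) z3).re
        = Complex.normSq z1 + Complex.normSq z2 + Complex.normSq z3 := by
      intro z1 z2 z3
      simp [Complex.mul_conj]
    rw [hre]
    have h3 : 0 < Complex.normSq (Complex.I * (-((b1 : ℂ) ^ 2 + (b2 : ℂ) ^ 2))) :=
      Complex.normSq_pos.mpr hc3ne
    have h1 := Complex.normSq_nonneg ((s : ℂ) * (b2 : ℂ) + Complex.I * ((b1 : ℂ) * (b3 : ℂ)))
    have h2 := Complex.normSq_nonneg (-(s : ℂ) * (b1 : ℂ) + Complex.I * ((b2 : ℂ) * (b3 : ℂ)))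
    linarith
  · ring


/-- For every class `B ∈ Λ` there exists an algebraic period point `x` orthogonal to `B`;
consequently `exp(B)` fixes the period point `(0,x,0)`, so `exp(B)(Q_alg) ∩ Q_alg ≠ ∅`. -/
theorem exp_fixes_an_alg_period (B : Fin 22 → ℤ) :
    ∃ x : Fin 22 → ℂ,
      lamForm ℂ x x = 0 ∧ 0 < (lamForm ℂ x (conjVec x)).re ∧
      lamForm ℂ (intVecC B) x = 0 ∧
      (∃ C : Fin 22 → ℤ, lamForm ℂ (intVecC C) x = 0 ∧ 0 < lamForm ℤ C C) ∧
      mukaiExp ℂ (intVecC B) ((0 : ℂ), x, (0 : ℂ)) = ((0 : ℂ), x, (0 : ℂ)) := by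
  by_cases hB12 : B 16 + B 19 = 0 ∧ B 17 + B 20 = 0
  · refine build B 1 Complex.I 0 ?_ ?_ ?_ (pv 18 21) (by decide) ?_
    · norm_num [Complex.I_sq]
    · simp [Complex.conj_I]
    · rw [hB12.1, hB12.2]; norm_num
    · simp (config := { decide := true }) only [pv]
      norm_num
  · obtain ⟨c1, c2, c3, hiso, hpos, horth⟩ :=
      case2 (B 16 + B 19) (B 17 + B 20) (B 18 + B 21) hB12
    refine build B c1 c2 c3 hiso hpos ?_
      (fun i => (B 16 + B 19) * pv 16 19 i + (B 17 + B 20) * pv 17 20 i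
        + (B 18 + B 21) * pv 18 21 i) ?_ ?_
    · push_cast at horth ⊢
      linear_combination horth
    · have h := lam_comb (R := ℤ)
        (fun i => (B 16 + B 19) * pv 16 19 i + (B 17 + B 20) * pv 17 20 i
          + (B 18 + B 21) * pv 18 21 i) (B 16 + B 19) (B 17 + B 20) (B 18 + B 21)
      simp only [Int.cast_id] at h
      rw [h]
      simp (config := { decide := true }) [pv]
      rcases not_and_or.mp hB12 with hne | hne
      · have hp : 0 < (B 16 + B 19) ^ 2 := by positivity
        nlinarith [sq_nonneg (B 17 + B 20), sq_nonneg (B 18 + B 21)]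
      · have hp : 0 < (B 17 + B 20) ^ 2 := by positivity
        nlinarith [sq_nonneg (B 16 + B 19), sq_nonneg (B 18 + B 21)]
    · simp (config := { decide := true }) only [pv]
      push_cast at horth ⊢
      linear_combination 2 * horth

end
end
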